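/- arXiv:1311.3138 — 2 statements merged into one kernel-verified Lean document; each statement's English description precedes it below -/
import Mathlib

section
/- Every finite subgroup of the semidirect product ℤ⁶ ⋊ ℤ/4ℤ, where the generator of ℤ/4ℤ acts on ℤ⁶ ≅ ℤ² ⊕ ℤ² ⊕ ℤ² by (−1) on the first summand and by the rotation matrix [[0,−1],[1,0]] on each of the last two summands, is isomorphic to the trivial group, ℤ/2ℤ, or ℤ/4ℤ. -/
/-- The sign by which `k ∈ ℤ/4ℤ` acts on the first summand `ℤ²` (action by `-1`). -/
def sgn (k : ZMod 4) : ℤ := if Even k.val then 1 else -1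

/-- The "cosine" of the rotation `[[0,-1],[1,0]]ᵏ` acting on the last two summands `ℤ²`. -/
def cc (k : ZMod 4) : ℤ := if k = 0 then 1 else if k = 2 then -1 else 0

/-- The "sine" of the rotation `[[0,-1],[1,0]]ᵏ` acting on the last two summands `ℤ²`. -/
def dd (k : ZMod 4) : ℤ := if k = 1 then 1 else if k = 3 then -1 else 0

lemma sgn_add : ∀ k l : ZMod 4, sgn (k + l) = sgn k * sgn l := by decide
lemma cc_add : ∀ k l : ZMod 4, cc (k + l) = cc k * cc l - dd k * dd l := by decide
lemma dd_add : ∀ k l : ZMod 4, dd (k + l) = dd k * cc l + cc k * dd l := by decide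

/-- The Vafa–Witten group `Γ = ℤ⁶ ⋊ ℤ/4ℤ`: the element `k ∈ ℤ/4ℤ` acts on
`ℤ⁶ ≅ ℤ² ⊕ ℤ² ⊕ ℤ²` (coordinates `(a,b,c,d,e,f)`) by `(-1)ᵏ` on `(a,b)` and by the rotation
matrix `[[0,-1],[1,0]]ᵏ` on `(c,d)` and on `(e,f)` (the action induced by
`(z₁,z₂,z₃) ↦ (-z₁, iz₂, iz₃)` on `ℂ³` restricted to the lattice `(ℤ+iℤ)³`). -/
@[ext] structure VafaWittenGroup where
  a : ℤ
  b : ℤ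
  c : ℤ
  d : ℤ
  e : ℤ
  f : ℤ
  k : ZMod 4

namespace VafaWittenGroup

instance : Mul VafaWittenGroup :=
  ⟨fun g h => ⟨g.a + sgn g.k * h.a, g.b + sgn g.k * h.b,
    g.c + (cc g.k * h.c - dd g.k * h.d), g.d + (dd g.k * h.c + cc g.k * h.d),
    g.e + (cc g.k * h.e - dd g.k * h.f), g.f + (dd g.k * h.e + cc g.k * h.f),
    g.k + h.k⟩⟩
instance : One VafaWittenGroup := ⟨⟨0, 0, 0, 0, 0, 0, 0⟩⟩
instance : Inv VafaWittenGroup :=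
  ⟨fun g => ⟨-(sgn (-g.k) * g.a), -(sgn (-g.k) * g.b),
    -(cc (-g.k) * g.c - dd (-g.k) * g.d), -(dd (-g.k) * g.c + cc (-g.k) * g.d),
    -(cc (-g.k) * g.e - dd (-g.k) * g.f), -(dd (-g.k) * g.e + cc (-g.k) * g.f),
    -g.k⟩⟩

lemma mul_def (g h : VafaWittenGroup) :
    g * h = ⟨g.a + sgn g.k * h.a, g.b + sgn g.k * h.b,
      g.c + (cc g.k * h.c - dd g.k * h.d), g.d + (dd g.k * h.c + cc g.k * h.d),
      g.e + (cc g.k * h.e - dd g.k * h.f), g.f + (dd g.k * h.e + cc g.k * h.f),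
      g.k + h.k⟩ := rfl

lemma inv_def (g : VafaWittenGroup) :
    g⁻¹ = ⟨-(sgn (-g.k) * g.a), -(sgn (-g.k) * g.b),
      -(cc (-g.k) * g.c - dd (-g.k) * g.d), -(dd (-g.k) * g.c + cc (-g.k) * g.d),
      -(cc (-g.k) * g.e - dd (-g.k) * g.f), -(dd (-g.k) * g.e + cc (-g.k) * g.f),
      -g.k⟩ := rfl

instance : Group VafaWittenGroup where
  mul_assoc x y z := by
    simp only [mul_def, mk.injEq, sgn_add, cc_add, dd_add]
    refine ⟨by ring, by ring, by ring, by ring, by ring, by ring, add_assoc _ _ _⟩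
  one_mul g := by
    show mk (0 + sgn 0 * g.a) (0 + sgn 0 * g.b) (0 + (cc 0 * g.c - dd 0 * g.d))
      (0 + (dd 0 * g.c + cc 0 * g.d)) (0 + (cc 0 * g.e - dd 0 * g.f))
      (0 + (dd 0 * g.e + cc 0 * g.f)) (0 + g.k) = g
    have h1 : sgn 0 = 1 := by decide
    have h2 : cc 0 = 1 := by decide
    have h3 : dd 0 = 0 := by decide
    simp [h1, h2, h3]
  mul_one g := by
    show mk (g.a + sgn g.k * 0) (g.b + sgn g.k * 0) (g.c + (cc g.k * 0 - dd g.k * 0))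
      (g.d + (dd g.k * 0 + cc g.k * 0)) (g.e + (cc g.k * 0 - dd g.k * 0))
      (g.f + (dd g.k * 0 + cc g.k * 0)) (g.k + 0) = g
    simp
  inv_mul_cancel g := by
    show _ = mk 0 0 0 0 0 0 0
    simp only [mul_def, inv_def, mk.injEq]
    refine ⟨by ring, by ring, by ring, by ring, by ring, by ring, neg_add_cancel _⟩

end VafaWittenGroup

/-!
The kernel of the projection `Γ → ℤ/4ℤ` is the translation lattice `ℤ⁶`, which is torsion-free.
So the projection is injective on every finite subgroup, which is therefore isomorphic to a
subgroup of `ℤ/4ℤ`, i.e. to `ℤ/d` for some divisor `d` of `4`.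
-/

namespace VafaWittenGroup

def proj : VafaWittenGroup →* Multiplicative (ZMod 4) where
  toFun g := Multiplicative.ofAdd g.k
  map_one' := rfl
  map_mul' _ _ := rfl

lemma pow_eq_of_k_eq_zero {g : VafaWittenGroup} (hk : g.k = 0) (n : ℕ) :
    g ^ n = ⟨n * g.a, n * g.b, n * g.c, n * g.d, n * g.e, n * g.f, 0⟩ := by
  induction n with
  | zero => ext <;> simp only [pow_zero, Nat.cast_zero, zero_mul] <;> rfl
  | succ n ih =>
    have hsgn : sgn 0 = 1 := by decide
    have hcc : cc 0 = 1 := by decide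
    have hdd : dd 0 = 0 := by decide
    rw [pow_succ, ih, mul_def]
    ext <;> simp only [hk, hsgn, hcc, hdd] <;> push_cast <;> ring

lemma eq_one_of_isOfFinOrder_of_k_eq_zero {g : VafaWittenGroup} (hg : IsOfFinOrder g)
    (hk : g.k = 0) : g = 1 := by
  obtain ⟨n, hn, hgn⟩ := hg.exists_pow_eq_one
  have hn' : (n : ℤ) ≠ 0 := Nat.cast_ne_zero.2 hn.ne'
  rw [pow_eq_of_k_eq_zero hk] at hgn
  obtain ⟨ha, hb, hc, hd, he, hf, -⟩ := mk.inj hgn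
  simp only [mul_eq_zero, hn', false_or] at ha hb hc hd he hf
  exact VafaWittenGroup.ext ha hb hc hd he hf hk

end VafaWittenGroup

theorem MonoidHom.injective_domRestrict_of_ker_torsionFree {G H : Type*} [Group G] [Group H]
    (φ : G →* H) (hφ : ∀ g, IsOfFinOrder g → φ g = 1 → g = 1) (P : Subgroup G) [Finite P] :
    Function.Injective (φ.domRestrict P) := by
  refine (injective_iff_map_eq_one _).2 fun g hg => Subtype.ext (hφ g ?_ hg)
  exact Submonoid.isOfFinOrder_coe.2 (isOfFinOrder_of_finite g)

theorem exists_dvd_mulEquiv_zmod_of_injective {P G : Type*} [Group P] [Group G] [IsCyclic G]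
    [Finite G] (φ : P →* G) (hφ : Function.Injective φ) :
    ∃ d, d ∣ Nat.card G ∧ Nonempty (P ≃* Multiplicative (ZMod d)) :=
  ⟨Nat.card P, Subgroup.card_dvd_of_injective φ hφ,
    ⟨(zmodCyclicMulEquiv (isCyclic_of_injective φ hφ)).symm⟩⟩

/-- Every finite subgroup of the Vafa–Witten group `ℤ⁶ ⋊ ℤ/4ℤ` is isomorphic to
the trivial group, `ℤ/2ℤ`, or `ℤ/4ℤ`. -/
theorem finite_subgroups_of_VafaWittenGroup (P : Subgroup VafaWittenGroup) (hP : Finite P) :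
    Nonempty (P ≃* Multiplicative (ZMod 1)) ∨ Nonempty (P ≃* Multiplicative (ZMod 2)) ∨
      Nonempty (P ≃* Multiplicative (ZMod 4)) := by
  have hinj := VafaWittenGroup.proj.injective_domRestrict_of_ker_torsionFree
    (fun _ hg hk => VafaWittenGroup.eq_one_of_isOfFinOrder_of_k_eq_zero hg hk) P
  obtain ⟨d, hd, he⟩ := exists_dvd_mulEquiv_zmod_of_injective _ hinj
  have hd4 : d = 1 ∨ d = 2 ∨ d = 4 := by
    have hdivisors : Nat.divisors 4 = {1, 2, 4} := by decide
    simpa [hdivisors] using Nat.mem_divisors.2 ⟨by simpa using hd, four_ne_zero⟩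
  rcases hd4 with rfl | rfl | rfl
  · exact Or.inl he
  · exact Or.inr (Or.inl he)
  · exact Or.inr (Or.inr he)
end

section
/- For the group G = ℤ ⋊ ℤ/4ℤ (action by −1) acting on ℝ by the crystallographic action (n,k)·x = (−1)ᵏ x + n, the quotient of [0, 1/2] under the action gives a G-CW structure with exactly two 0-cell orbits (at 0 and 1/2) with stabilizers isomorphic to ℤ/4ℤ, and one 1-cell orbit with stabilizer isomorphic to ℤ/2ℤ. -/
/-- The semidirect product `ℤ ⋊ ℤ/4ℤ`, where the generator of `ℤ/4ℤ` acts on `ℤ`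
by multiplication by `-1`. -/
@[ext] structure ZRtimesZMod4 where
  n : ℤ
  k : ZMod 4

namespace ZRtimesZMod4

instance : Mul ZRtimesZMod4 := ⟨fun a b => ⟨a.n + sgn a.k * b.n, a.k + b.k⟩⟩
instance : One ZRtimesZMod4 := ⟨⟨0, 0⟩⟩
instance : Inv ZRtimesZMod4 := ⟨fun a => ⟨-(sgn (-a.k) * a.n), -a.k⟩⟩

lemma mul_def (a b : ZRtimesZMod4) : a * b = ⟨a.n + sgn a.k * b.n, a.k + b.k⟩ := rfl

instance : Group ZRtimesZMod4 where
  mul_assoc a b c := by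
    simp only [mul_def, mk.injEq, sgn_add]
    exact ⟨by ring, add_assoc _ _ _⟩
  one_mul a := by
    show mk (0 + sgn 0 * a.n) (0 + a.k) = a
    have h : sgn 0 = 1 := by decide
    simp [h]
  mul_one a := by
    show mk (a.n + sgn a.k * 0) (a.k + 0) = a
    simp
  inv_mul_cancel a := by
    show mk (-(sgn (-a.k) * a.n) + sgn (-a.k) * a.n) (-a.k + a.k) = 1
    show _ = mk 0 0
    simp

/-- The crystallographic action of `ℤ ⋊ ℤ/4ℤ` on `ℝ`: `(n,k) • x = (-1)ᵏ x + n`. -/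
noncomputable instance : SMul ZRtimesZMod4 ℝ :=
  ⟨fun g x => (sgn g.k : ℝ) * x + (g.n : ℝ)⟩

lemma smul_def (g : ZRtimesZMod4) (x : ℝ) : g • x = (sgn g.k : ℝ) * x + (g.n : ℝ) := rfl

noncomputable instance : MulAction ZRtimesZMod4 ℝ where
  one_smul x := by
    show (sgn (0 : ZMod 4) : ℝ) * x + ((0 : ℤ) : ℝ) = x
    have h : sgn (0 : ZMod 4) = 1 := by decide
    simp [h]
  mul_smul a b x := by
    simp only [smul_def, mul_def, sgn_add]
    push_cast
    ring

end ZRtimesZMod4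

namespace GCWaux

open ZRtimesZMod4 MulAction

lemma sgn_even {k : ZMod 4} (h : Even k.val) : sgn k = 1 := by unfold sgn; simp [h]

lemma sgn_odd {k : ZMod 4} (h : ¬ Even k.val) : sgn k = -1 := by unfold sgn; simp [h]

lemma mem_stab0 (g : ZRtimesZMod4) :
    g ∈ stabilizer ZRtimesZMod4 (0 : ℝ) ↔ g.n = 0 := by
  rw [mem_stabilizer_iff, smul_def]
  constructor
  · intro h
    have : (g.n : ℝ) = 0 := by linarith [h]
    exact_mod_cast this
  · intro h; simp [h]

lemma mem_stabhalf (g : ZRtimesZMod4) :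
    g ∈ stabilizer ZRtimesZMod4 ((1:ℝ)/2) ↔
      g.n = if Even g.k.val then 0 else 1 := by
  rw [mem_stabilizer_iff, smul_def]
  by_cases h : Even g.k.val
  · rw [sgn_even h]
    simp only [h, if_true]
    constructor
    · intro he
      have : (g.n : ℝ) = 0 := by push_cast at he ⊢; linarith
      exact_mod_cast this
    · intro he; simp [he]
  · rw [sgn_odd h]
    simp only [h, if_false]
    constructor
    · intro he
      have : (g.n : ℝ) = 1 := by push_cast at he ⊢; linarith
      exact_mod_cast this
    · intro he; push_cast [he]; ring
  
lemma mem_stabIoo {x : ℝ} (hx : x ∈ Set.Ioo (0:ℝ) (1/2)) (g : ZRtimesZMod4) :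
    g ∈ stabilizer ZRtimesZMod4 x ↔ g.n = 0 ∧ Even g.k.val := by
  obtain ⟨hx0, hx1⟩ := hx
  rw [mem_stabilizer_iff, smul_def]
  constructor
  · intro h
    by_cases he : Even g.k.val
    · rw [sgn_even he] at h
      have : (g.n : ℝ) = 0 := by push_cast at h ⊢; linarith
      exact ⟨by exact_mod_cast this, he⟩
    · rw [sgn_odd he] at h
      have h2 : (g.n : ℝ) = 2 * x := by push_cast at h ⊢; linarith
      have h3 : (0:ℝ) < (g.n:ℝ) := by rw [h2]; linarith
      have h4 : (g.n:ℝ) < 1 := by rw [h2]; linarith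
      have h3' : (0:ℤ) < g.n := by exact_mod_cast h3
      have h4' : g.n < 1 := by exact_mod_cast h4
      omega
  · rintro ⟨h0, he⟩
    rw [sgn_even he, h0]; simp

/-- keys for ZMod2 iso -/
lemma zmod2_hom : ∀ k l : ZMod 4, Even k.val → Even l.val →
    (if k + l = 0 then (1 : Multiplicative (ZMod 2)) else Multiplicative.ofAdd 1)
      = (if k = 0 then (1 : Multiplicative (ZMod 2)) else Multiplicative.ofAdd 1)
        * (if l = 0 then (1 : Multiplicative (ZMod 2)) else Multiplicative.ofAdd 1) := by
  decide

end GCWaux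

/-- For `G = ℤ ⋊ ℤ/4ℤ` (action by `-1`) acting on `ℝ` by `(n,k)•x = (-1)ᵏx + n`,
the interval `[0, 1/2]` is a fundamental domain giving a `G`-CW structure with exactly two
`0`-cell orbits (at `0` and `1/2`), both with stabilizer isomorphic to `ℤ/4ℤ`, and one
`1`-cell orbit with stabilizer isomorphic to `ℤ/2ℤ`. -/
theorem GCW_structure_of_R_with_ZRtimesZMod4_action :
    -- every point of ℝ lies in the orbit of a point of the 'cell' [0, 1/2]:
    (∀ x : ℝ, ∃ g : ZRtimesZMod4, ∃ y ∈ Set.Icc (0 : ℝ) (1/2), g • y = x) ∧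
    -- the two 0-cells 0 and 1/2 lie in different orbits:
    (¬ ∃ g : ZRtimesZMod4, g • (0 : ℝ) = (1/2 : ℝ)) ∧
    -- their stabilizers are isomorphic to ℤ/4ℤ:
    Nonempty (MulAction.stabilizer ZRtimesZMod4 (0 : ℝ) ≃* Multiplicative (ZMod 4)) ∧
    Nonempty (MulAction.stabilizer ZRtimesZMod4 ((1 : ℝ)/2) ≃* Multiplicative (ZMod 4)) ∧
    -- the stabilizer of the (open) 1-cell is isomorphic to ℤ/2ℤ:
    (∀ x ∈ Set.Ioo (0 : ℝ) (1/2),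
      Nonempty (MulAction.stabilizer ZRtimesZMod4 x ≃* Multiplicative (ZMod 2))) := by
  refine ⟨?_, ?_, ?_, ?_, ?_⟩
  · -- fundamental domain
    intro x
    by_cases hf : Int.fract x ≤ 1/2
    · refine ⟨⟨⌊x⌋, 0⟩, Int.fract x, ⟨Int.fract_nonneg x, hf⟩, ?_⟩
      rw [ZRtimesZMod4.smul_def]
      have h0 : sgn (0 : ZMod 4) = 1 := by decide
      show (sgn (0 : ZMod 4) : ℝ) * _ + (⌊x⌋ : ℝ) = x
      rw [h0, Int.fract]
      push_cast
      ring
    · refine ⟨⟨⌊x⌋ + 1, 1⟩, 1 - Int.fract x,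
        ⟨by linarith [Int.fract_lt_one x], by linarith⟩, ?_⟩
      rw [ZRtimesZMod4.smul_def]
      have h1 : sgn (1 : ZMod 4) = -1 := by decide
      show (sgn (1 : ZMod 4) : ℝ) * _ + ((⌊x⌋ + 1 : ℤ) : ℝ) = x
      rw [h1, Int.fract]
      push_cast
      ring
  · -- 0 and 1/2 in different orbits
    rintro ⟨g, hg⟩
    rw [ZRtimesZMod4.smul_def] at hg
    have h1 : ((2 * g.n : ℤ) : ℝ) = 1 := by push_cast; linarith
    have h2 : (2 * g.n : ℤ) = 1 := by exact_mod_cast h1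
    omega
  · -- stabilizer of 0
    exact ⟨{
      toFun := fun g => Multiplicative.ofAdd g.val.k
      invFun := fun k => ⟨⟨0, k.toAdd⟩, (GCWaux.mem_stab0 _).mpr rfl⟩
      left_inv := fun g =>
        Subtype.ext (ZRtimesZMod4.ext ((GCWaux.mem_stab0 g.val).mp g.2).symm rfl)
      right_inv := fun k => rfl
      map_mul' := fun a b => rfl }⟩
  · -- stabilizer of 1/2
    exact ⟨{
      toFun := fun g => Multiplicative.ofAdd g.val.k
      invFun := fun k => ⟨⟨if Even k.toAdd.val then 0 else 1, k.toAdd⟩,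
        (GCWaux.mem_stabhalf _).mpr rfl⟩
      left_inv := fun g =>
        Subtype.ext (ZRtimesZMod4.ext ((GCWaux.mem_stabhalf g.val).mp g.2).symm rfl)
      right_inv := fun k => rfl
      map_mul' := fun a b => rfl }⟩
  · -- stabilizer of points of the open cell
    intro x hx
    have key : ∀ m : Multiplicative (ZMod 2),
        (if (if m = 1 then (0 : ZMod 4) else 2) = 0 then (1 : Multiplicative (ZMod 2))
          else Multiplicative.ofAdd 1) = m := by decide
    have k2 : ∀ k : ZMod 4, Even k.val → k ≠ 0 → k = 2 := by decide
    refine ⟨{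
      toFun := fun g => if g.val.k = 0 then 1 else Multiplicative.ofAdd 1
      invFun := fun m => ⟨⟨0, if m = 1 then 0 else 2⟩,
        (GCWaux.mem_stabIoo hx _).mpr ⟨rfl, by split <;> decide⟩⟩
      left_inv := fun g => ?_
      right_inv := fun m => key m
      map_mul' := fun a b => GCWaux.zmod2_hom _ _
        ((GCWaux.mem_stabIoo hx _).mp a.2).2 ((GCWaux.mem_stabIoo hx _).mp b.2).2 }⟩
    obtain ⟨hn, hk⟩ := (GCWaux.mem_stabIoo hx _).mp g.2
    apply Subtype.ext
    by_cases h0 : g.val.k = 0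
    · simp only [h0, if_pos rfl]
      exact ZRtimesZMod4.ext hn.symm h0.symm
    · simp only [if_neg h0]
      refine ZRtimesZMod4.ext hn.symm ?_
      rw [if_neg (by decide)]
      exact (k2 _ hk h0).symm
end
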